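/- Let f(z) = Σ a_n z^n be analytic on 𝔻 with |f| ≤ 1, p ∈ (0,1], N and m positive integers. If r ∈ [0,1) satisfies 2 r^N (1 + N - N r)(1 + r^m) ≤ p (1 - r)^2 (1 - r^m), then for all |z| = r: |f(z^m)|^p + Σ_{n≥N} (n+1) |a_n| r^n ≤ 1. -/

import Mathlib

/-!
Write `A = |a₀|` and `ρ = r ^ m`. By the Schwarz–Pick lemma `|f(z ^ m)| ≤ (A + ρ) / (1 + A ρ)`,
so `1 - |f(z ^ m)| ≥ (1 - A)(1 - ρ) / (1 + A ρ)`. By Wiener's inequality `|aₙ| ≤ 1 - A²` for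
`n ≥ 1`, the tail is at most `(1 - A²) S` with `S = r ^ N (1 + N - N r) / (1 - r)²`. Since
`(1 + A)(1 + A ρ) ≤ 2 (1 + ρ)`, the hypothesis on `r` gives `(1 - A²) S ≤ p (1 - |f(z ^ m)|)`,
and Bernoulli's inequality `x ^ p ≤ 1 + p (x - 1)` concludes.

Both Schwarz–Pick bounds come from the Schwarz lemma for `mobius (f 0) ∘ f`; if `|f|` attains
`1`, then `f` is constant by the maximum modulus principle. Wiener's inequality is the bound
`|g'(0)| ≤ 1 - |g(0)|²` for `g(w) = ∑ a_{nj} w ^ j`, which is bounded by `1` because `g(z ^ n)`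
is the average of `f` over the rotations of `z` by the `n`-th roots of unity.
-/

open Metric Complex Set Finset ComplexConjugate

noncomputable def mobius (c w : ℂ) : ℂ := (w - c) / (1 - conj c * w)

section Mobius

variable {c w : ℂ}

lemma normSq_one_sub_conj_mul_sub_normSq_sub (c w : ℂ) :
    normSq (1 - conj c * w) - normSq (w - c) = (1 - normSq c) * (1 - normSq w) := by
  simp only [normSq_apply, sub_re, sub_im, mul_re, mul_im, conj_re, conj_im, one_re, one_im]
  ring

lemma one_sub_conj_mul_ne_zero (hc : ‖c‖ < 1) (hw : ‖w‖ < 1) : 1 - conj c * w ≠ 0 := by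
  refine sub_ne_zero.2 fun h => ?_
  have : ‖conj c * w‖ < 1 := by
    rw [norm_mul, norm_conj]
    nlinarith [norm_nonneg c, norm_nonneg w]
  simp [← h] at this

lemma mobius_self (c : ℂ) : mobius c c = 0 := by simp [mobius]

lemma norm_mobius_lt_one (hc : ‖c‖ < 1) (hw : ‖w‖ < 1) : ‖mobius c w‖ < 1 := by
  have hden := one_sub_conj_mul_ne_zero hc hw
  rw [mobius, norm_div, div_lt_one (norm_pos_iff.2 hden), ← sq_lt_sq₀ (norm_nonneg _)
    (norm_nonneg _), ← normSq_eq_norm_sq, ← normSq_eq_norm_sq, ← sub_pos,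
    normSq_one_sub_conj_mul_sub_normSq_sub, normSq_eq_norm_sq, normSq_eq_norm_sq]
  have := norm_nonneg c
  have := norm_nonneg w
  exact mul_pos (by nlinarith) (by nlinarith)

lemma mapsTo_mobius (hc : ‖c‖ < 1) : MapsTo (mobius c) (ball 0 1) (ball 0 1) :=
  fun _ hw => mem_ball_zero_iff.2 (norm_mobius_lt_one hc (mem_ball_zero_iff.1 hw))

lemma differentiableOn_mobius (hc : ‖c‖ < 1) : DifferentiableOn ℂ (mobius c) (ball 0 1) :=
  fun _ hw => ((differentiableAt_id.sub_const c).div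
    ((differentiableAt_id.const_mul _).const_sub 1)
    (one_sub_conj_mul_ne_zero hc (mem_ball_zero_iff.1 hw))).differentiableWithinAt

lemma hasDerivAt_mobius_self (hc : ‖c‖ < 1) :
    HasDerivAt (mobius c) ((1 - ‖c‖ ^ 2 : ℝ) : ℂ)⁻¹ c := by
  have hden := one_sub_conj_mul_ne_zero hc hc
  refine (((hasDerivAt_id c).sub_const c).div
    (((hasDerivAt_id c).const_mul (conj c)).const_sub 1) hden).congr_deriv ?_
  simp only [id, sub_self, zero_mul, sub_zero, one_mul, conj_mul'] at hden ⊢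
  push_cast
  field_simp

lemma norm_mul_one_add_le_of_norm_mobius_le {ρ : ℝ} (hc : ‖c‖ < 1) (hw : ‖w‖ < 1)
    (hρ0 : 0 ≤ ρ) (hρ1 : ρ ≤ 1) (h : ‖mobius c w‖ ≤ ρ) :
    ‖w‖ * (1 + ‖c‖ * ρ) ≤ ‖c‖ + ρ := by
  have hden := norm_pos_iff.2 (one_sub_conj_mul_ne_zero hc hw)
  rw [mobius, norm_div, div_le_iff₀ hden] at h
  have hid := normSq_one_sub_conj_mul_sub_normSq_sub c w
  rw [normSq_eq_norm_sq, normSq_eq_norm_sq, normSq_eq_norm_sq, normSq_eq_norm_sq] at hid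
  have hdist : |‖w‖ - ‖c‖| ≤ ‖w - c‖ := abs_norm_sub_norm_le w c
  have hk := norm_nonneg c
  have hs := norm_nonneg w
  -- by `hid`, `(1 - ‖c‖ ‖w‖) ^ 2 - (‖w‖ - ‖c‖) ^ 2 = ‖1 - conj c * w‖ ^ 2 - ‖w - c‖ ^ 2`
  have hsq : (‖w‖ - ‖c‖) ^ 2 ≤ (ρ * (1 - ‖c‖ * ‖w‖)) ^ 2 := by
    have h1 : ‖w - c‖ ^ 2 ≤ ρ ^ 2 * ‖1 - conj c * w‖ ^ 2 := by
      rw [← mul_pow]; exact pow_le_pow_left₀ (norm_nonneg _) h 2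
    have h2 : (‖w‖ - ‖c‖) ^ 2 ≤ ‖w - c‖ ^ 2 := by
      rw [← sq_abs]; exact pow_le_pow_left₀ (abs_nonneg _) hdist 2
    nlinarith [mul_le_mul_of_nonneg_left h2 (by nlinarith : (0:ℝ) ≤ 1 - ρ ^ 2)]
  nlinarith [(abs_le_of_sq_le_sq' hsq (mul_nonneg hρ0 (by nlinarith))).2]

end Mobius

section SchwarzPick

variable {g : ℂ → ℂ}

lemma mapsTo_ball_or_eqOn_const (hd : DifferentiableOn ℂ g (ball 0 1))
    (hg : MapsTo g (ball 0 1) (closedBall 0 1)) :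
    MapsTo g (ball 0 1) (ball 0 1) ∨ ‖g 0‖ = 1 ∧ EqOn g (fun _ => g 0) (ball 0 1) := by
  by_cases hopen : MapsTo g (ball 0 1) (ball 0 1)
  · exact Or.inl hopen
  obtain ⟨z₀, hz₀, hgz₀⟩ := not_forall₂.1 hopen
  have hnorm : ‖g z₀‖ = 1 :=
    le_antisymm (mem_closedBall_zero_iff.1 (hg hz₀)) (not_lt.1 (mt mem_ball_zero_iff.2 hgz₀))
  have hmax : IsMaxOn (norm ∘ g) (ball 0 1) z₀ := fun z hz =>
    (mem_closedBall_zero_iff.1 (hg hz)).trans hnorm.ge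
  have hconst := Complex.eqOn_of_isPreconnected_of_isMaxOn_norm
    (convex_ball 0 1).isPreconnected isOpen_ball hd hz₀ hmax
  have hg0 : g 0 = g z₀ := hconst (mem_ball_self one_pos)
  exact Or.inr ⟨hg0 ▸ hnorm, hg0 ▸ hconst⟩

lemma norm_mul_one_add_le_of_mapsTo_ball (hd : DifferentiableOn ℂ g (ball 0 1))
    (hg : MapsTo g (ball 0 1) (ball 0 1)) {w : ℂ} (hw : w ∈ ball 0 1) :
    ‖g w‖ * (1 + ‖g 0‖ * ‖w‖) ≤ ‖g 0‖ + ‖w‖ := by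
  have hc : ‖g 0‖ < 1 := mem_ball_zero_iff.1 (hg (mem_ball_self one_pos))
  have hschwarz : ‖mobius (g 0) (g w)‖ ≤ ‖w‖ :=
    Complex.norm_le_norm_of_mapsTo_ball (f := mobius (g 0) ∘ g)
      ((differentiableOn_mobius hc).comp hd hg)
      (((mapsTo_mobius hc).comp hg).mono_right ball_subset_closedBall)
      (mobius_self _) (mem_ball_zero_iff.1 hw)
  exact norm_mul_one_add_le_of_norm_mobius_le hc (mem_ball_zero_iff.1 (hg hw)) (norm_nonneg w)
    (mem_ball_zero_iff.1 hw).le hschwarz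

lemma norm_deriv_zero_le_of_mapsTo_ball (hd : DifferentiableOn ℂ g (ball 0 1))
    (hg : MapsTo g (ball 0 1) (ball 0 1)) :
    ‖deriv g 0‖ ≤ 1 - ‖g 0‖ ^ 2 := by
  have hc : ‖g 0‖ < 1 := mem_ball_zero_iff.1 (hg (mem_ball_self one_pos))
  have hpos : 0 < 1 - ‖g 0‖ ^ 2 := by nlinarith [norm_nonneg (g 0)]
  have hchain : HasDerivAt (mobius (g 0) ∘ g) (((1 - ‖g 0‖ ^ 2 : ℝ) : ℂ)⁻¹ * deriv g 0) 0 :=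
    (hasDerivAt_mobius_self hc).comp 0
      ((hd.differentiableAt (isOpen_ball.mem_nhds (mem_ball_self one_pos))).hasDerivAt)
  have hschwarz : ‖deriv (mobius (g 0) ∘ g) 0‖ ≤ 1 :=
    Complex.norm_deriv_le_one_of_mapsTo_ball ((differentiableOn_mobius hc).comp hd hg)
      (by simpa [mobius_self] using
        ((mapsTo_mobius hc).comp hg).mono_right ball_subset_closedBall) one_pos
  rw [hchain.deriv, norm_mul, norm_inv, norm_real, Real.norm_of_nonneg hpos.le,
    inv_mul_le_iff₀ hpos, mul_one] at hschwarz
  exact hschwarz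

theorem norm_mul_one_add_le_of_mapsTo_closedBall (hd : DifferentiableOn ℂ g (ball 0 1))
    (hg : MapsTo g (ball 0 1) (closedBall 0 1)) {w : ℂ} (hw : w ∈ ball 0 1) :
    ‖g w‖ * (1 + ‖g 0‖ * ‖w‖) ≤ ‖g 0‖ + ‖w‖ := by
  rcases mapsTo_ball_or_eqOn_const hd hg with hopen | ⟨hnorm, hconst⟩
  · exact norm_mul_one_add_le_of_mapsTo_ball hd hopen hw
  · rw [hconst hw, hnorm, one_mul, one_mul]

theorem norm_deriv_zero_le_of_mapsTo_closedBall (hd : DifferentiableOn ℂ g (ball 0 1))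
    (hg : MapsTo g (ball 0 1) (closedBall 0 1)) :
    ‖deriv g 0‖ ≤ 1 - ‖g 0‖ ^ 2 := by
  rcases mapsTo_ball_or_eqOn_const hd hg with hopen | ⟨hnorm, hconst⟩
  · exact norm_deriv_zero_le_of_mapsTo_ball hd hopen
  · have : g =ᶠ[nhds 0] fun _ => g 0 :=
      Filter.eventually_of_mem (isOpen_ball.mem_nhds (mem_ball_self one_pos)) hconst
    rw [this.deriv_eq, hnorm, deriv_const]
    norm_num

end SchwarzPick

lemma IsPrimitiveRoot.sum_pow_pow_eq_ite {R : Type*} [CommRing R] [IsDomain R] {ζ : R} {n : ℕ}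
    (hζ : IsPrimitiveRoot ζ n) (m : ℕ) :
    ∑ k ∈ range n, (ζ ^ m) ^ k = if n ∣ m then (n : R) else 0 := by
  split_ifs with hdvd
  · simp [(hζ.pow_eq_one_iff_dvd m).2 hdvd]
  · have hne : ζ ^ m - 1 ≠ 0 := sub_ne_zero.2 (mt (hζ.pow_eq_one_iff_dvd m).1 hdvd)
    refine (mul_eq_zero.1 ?_).resolve_right hne
    rw [geom_sum_mul, pow_right_comm, hζ.pow_eq_one, one_pow, sub_self]

theorem IsPrimitiveRoot.hasSum_inv_mul_sum_rotate {𝕜 : Type*} [Field 𝕜] [CharZero 𝕜]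
    [TopologicalSpace 𝕜] [IsTopologicalRing 𝕜] {ζ : 𝕜} {n : ℕ} (hζ : IsPrimitiveRoot ζ n)
    (hn : 0 < n) {a : ℕ → 𝕜} {F : 𝕜 → 𝕜} {z : 𝕜}
    (hF : ∀ k, HasSum (fun m => a m * (ζ ^ k * z) ^ m) (F (ζ ^ k * z))) :
    HasSum (fun j => a (n * j) * (z ^ n) ^ j) ((n : 𝕜)⁻¹ * ∑ k ∈ range n, F (ζ ^ k * z)) := by
  have hn' : (n : 𝕜) ≠ 0 := Nat.cast_ne_zero.2 hn.ne'
  have hsum := (hasSum_sum (s := range n) fun k _ => hF k).mul_left (n : 𝕜)⁻¹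
  have hterm : ∀ m, (n : 𝕜)⁻¹ * ∑ k ∈ range n, a m * (ζ ^ k * z) ^ m
      = if n ∣ m then a m * z ^ m else 0 := by
    intro m
    simp_rw [mul_pow, ← pow_mul, mul_comm _ m, pow_mul, mul_left_comm _ ((ζ ^ m) ^ _),
      ← Finset.sum_mul, hζ.sum_pow_pow_eq_ite]
    split_ifs <;> simp [hn']
  simp_rw [hterm] at hsum
  refine ((mul_right_injective₀ hn.ne').hasSum_iff ?_).2 hsum |>.congr_fun ?_
  · rintro m hm
    rw [if_neg fun ⟨j, hj⟩ => hm ⟨j, hj.symm⟩]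
  · intro j
    simp [pow_mul]

theorem hasFPowerSeriesOnBall_ofScalars_of_hasSum {b : ℕ → ℂ} {g : ℂ → ℂ}
    (h : ∀ w ∈ ball (0 : ℂ) 1, HasSum (fun j => b j * w ^ j) (g w)) :
    HasFPowerSeriesOnBall g (FormalMultilinearSeries.ofScalars ℂ b) 0 1 where
  r_le := by
    refine ENNReal.le_of_forall_nnreal_lt fun ρ hρ => ?_
    refine FormalMultilinearSeries.le_radius_of_summable_norm _ ?_
    have hρ' : ((ρ : ℝ) : ℂ) ∈ ball 0 1 := by simpa using hρ
    simpa [FormalMultilinearSeries.ofScalars_norm] using (h _ hρ').summable.norm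
  r_pos := one_pos
  hasSum {y} hy := by
    rw [← ENNReal.ofReal_one, Metric.eball_ofReal] at hy
    simpa [FormalMultilinearSeries.ofScalars_apply_eq, mul_comm] using h y hy

lemma hasSum_mul_zero_pow {R : Type*} [Semiring R] [TopologicalSpace R] (a : ℕ → R) :
    HasSum (fun k => a k * (0 : R) ^ k) (a 0) := by
  simpa using hasSum_single (f := fun k => a k * (0 : R) ^ k) 0 fun k hk => by simp [hk]

section Wiener

variable {f : ℂ → ℂ} {a : ℕ → ℂ}

lemma exists_hasSum_coeff_mul_pow_of_mapsTo_closedBall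
    (hb : MapsTo f (ball 0 1) (closedBall 0 1))
    (hsum : ∀ z ∈ ball (0 : ℂ) 1, HasSum (fun k => a k * z ^ k) (f z))
    {n : ℕ} (hn : 0 < n) {w : ℂ} (hw : w ∈ ball 0 1) :
    ∃ s, HasSum (fun j => a (n * j) * w ^ j) s ∧ ‖s‖ ≤ 1 := by
  obtain ⟨z, rfl⟩ := IsAlgClosed.exists_pow_nat_eq w hn
  have hz : ‖z‖ < 1 := by
    rw [mem_ball_zero_iff, norm_pow] at hw
    exact (pow_lt_one_iff_of_nonneg (norm_nonneg z) hn.ne').1 hw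
  have hζ := Complex.isPrimitiveRoot_exp n hn.ne'
  have hrot : ∀ k, (exp (2 * Real.pi * I / n)) ^ k * z ∈ ball 0 1 := fun k => by
    rwa [mem_ball_zero_iff, norm_mul, norm_pow, hζ.norm'_eq_one hn.ne', one_pow, one_mul]
  refine ⟨_, hζ.hasSum_inv_mul_sum_rotate hn fun k => hsum _ (hrot k), ?_⟩
  calc ‖(n : ℂ)⁻¹ * ∑ k ∈ range n, f (exp (2 * Real.pi * I / n) ^ k * z)‖
      ≤ (n : ℝ)⁻¹ * ∑ _k ∈ range n, (1 : ℝ) := by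
        rw [norm_mul, norm_inv, norm_natCast]
        gcongr
        exact norm_sum_le_of_le _ fun k _ => mem_closedBall_zero_iff.1 (hb (hrot k))
    _ = 1 := by simp [hn.ne']

theorem norm_coeff_le_one_sub_sq (hb : MapsTo f (ball 0 1) (closedBall 0 1))
    (hsum : ∀ z ∈ ball (0 : ℂ) 1, HasSum (fun k => a k * z ^ k) (f z))
    {n : ℕ} (hn : 0 < n) : ‖a n‖ ≤ 1 - ‖a 0‖ ^ 2 := by
  choose! g hg hgb using fun w (hw : w ∈ ball (0 : ℂ) 1) =>
    exists_hasSum_coeff_mul_pow_of_mapsTo_closedBall hb hsum hn hw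
  have hG := hasFPowerSeriesOnBall_ofScalars_of_hasSum hg
  have hG0 : g 0 = a 0 := by
    simpa using (hg 0 (mem_ball_self one_pos)).unique (hasSum_mul_zero_pow _)
  have hderiv : deriv g 0 = a n := by
    simpa [FormalMultilinearSeries.ofScalars_apply_eq] using hG.hasFPowerSeriesAt.hasDerivAt.deriv
  have hdiff : DifferentiableOn ℂ g (ball 0 1) := by
    simpa [← ENNReal.ofReal_one, Metric.eball_ofReal] using hG.differentiableOn
  simpa [hG0, hderiv] using norm_deriv_zero_le_of_mapsTo_closedBall hdiff
    fun w hw => mem_closedBall_zero_iff.2 (hgb w hw)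

end Wiener

lemma hasSum_succ_mul_pow_add {𝕜 : Type*} [NormedField 𝕜] [CompleteSpace 𝕜] {r : 𝕜}
    (hr : ‖r‖ < 1) (N : ℕ) :
    HasSum (fun n => ((N + n + 1 : ℕ) : 𝕜) * r ^ (N + n))
      (r ^ N * (1 + N - N * r) / (1 - r) ^ 2) := by
  have hr1 : 1 - r ≠ 0 := sub_ne_zero.2 fun h => by simp [← h] at hr
  have := (((hasSum_geometric_of_norm_lt_one hr).mul_left ((N : 𝕜) + 1)).add
    (hasSum_coe_mul_geometric_of_norm_lt_one hr)).mul_left (r ^ N)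
  have hterm : (fun n => ((N + n + 1 : ℕ) : 𝕜) * r ^ (N + n))
      = fun n : ℕ => r ^ N * (((N : 𝕜) + 1) * r ^ n + n * r ^ n) := by
    funext n
    push_cast
    ring
  have hvalue : r ^ N * (1 + N - N * r) / (1 - r) ^ 2
      = r ^ N * (((N : 𝕜) + 1) * (1 - r)⁻¹ + r / (1 - r) ^ 2) := by
    field_simp
    ring
  rwa [hterm, hvalue]

lemma tsum_mul_mul_le_of_hasSum {u c v : ℕ → ℝ} {B S : ℝ} (hS : HasSum (fun n => u n * v n) S)
    (huv : ∀ n, 0 ≤ u n * v n) (hc0 : ∀ n, 0 ≤ c n) (hc : ∀ n, c n ≤ B) :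
    ∑' n, u n * c n * v n ≤ B * S := by
  have hle : ∀ n, u n * c n * v n ≤ B * (u n * v n) := fun n => by
    rw [mul_right_comm, mul_comm]
    exact mul_le_mul_of_nonneg_right (hc n) (huv n)
  exact hasSum_le hle
    ((hS.summable.mul_left B).of_nonneg_of_le (fun n => by nlinarith [huv n, hc0 n]) hle).hasSum
    (hS.mul_left B)

lemma one_sub_sq_mul_le_of_schwarzPick {A ρ x S p : ℝ} (hA0 : 0 ≤ A) (hA1 : A ≤ 1) (hρ0 : 0 ≤ ρ)
    (hS : 0 ≤ S) (hp : 0 ≤ p) (hx : x * (1 + A * ρ) ≤ A + ρ) (hSρ : 2 * S * (1 + ρ) ≤ p * (1 - ρ)) :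
    (1 - A ^ 2) * S ≤ p * (1 - x) := by
  have hpos : 0 < 1 + A * ρ := by positivity
  have hA : 0 ≤ 1 - A := sub_nonneg.2 hA1
  refine le_of_mul_le_mul_right ?_ hpos
  calc (1 - A ^ 2) * S * (1 + A * ρ) = (1 - A) * S * ((1 + A) * (1 + A * ρ)) := by ring
    _ ≤ (1 - A) * S * (2 * (1 + ρ)) := by gcongr (1 - A) * S * ?_; nlinarith
    _ ≤ (1 - A) * (p * (1 - ρ)) := by nlinarith
    _ ≤ p * (1 - x) * (1 + A * ρ) := by nlinarith

theorem bohr_rogosinski_weighted_tail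
    (f : ℂ → ℂ) (a : ℕ → ℂ) (p : ℝ) (N m : ℕ) (r : ℝ)
    (hf : DifferentiableOn ℂ f (ball (0:ℂ) 1))
    (hb : ∀ z ∈ ball (0:ℂ) 1, ‖f z‖ ≤ 1)
    (hsum : ∀ z ∈ ball (0:ℂ) 1, HasSum (fun n : ℕ => a n * z ^ n) (f z))
    (hp : p ∈ Set.Ioc (0:ℝ) 1) (hN : 0 < N) (hm : 0 < m)
    (hr : r ∈ Set.Ico (0:ℝ) 1)
    (hcond : 2 * r ^ N * (1 + N - N * r) * (1 + r ^ m)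
        ≤ p * (1 - r) ^ 2 * (1 - r ^ m)) :
    ∀ z : ℂ, ‖z‖ = r →
      ‖f (z ^ m)‖ ^ p
        + ∑' n : ℕ, ((N + n + 1 : ℕ) : ℝ) * ‖a (N + n)‖ * r ^ (N + n)
        ≤ 1 := by
  obtain ⟨hp0, hp1⟩ := hp
  obtain ⟨hr0, hr1⟩ := hr
  intro z hz
  have hb' : MapsTo f (ball 0 1) (closedBall 0 1) := fun w hw =>
    mem_closedBall_zero_iff.2 (hb w hw)
  have hzm : z ^ m ∈ ball (0 : ℂ) 1 := by
    rw [mem_ball_zero_iff, norm_pow, hz]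
    exact pow_lt_one₀ hr0 hr1 hm.ne'
  have ha0 : a 0 = f 0 := (hasSum_mul_zero_pow a).unique (hsum 0 (mem_ball_self one_pos))
  have hpick := norm_mul_one_add_le_of_mapsTo_closedBall hf hb' hzm
  rw [norm_pow, hz, ← ha0] at hpick
  have hS := hasSum_succ_mul_pow_add (by rwa [Real.norm_of_nonneg hr0]) N
  have hSρ : 2 * (r ^ N * (1 + N - N * r) / (1 - r) ^ 2) * (1 + r ^ m) ≤ p * (1 - r ^ m) := by
    rw [mul_div_assoc', div_mul_eq_mul_div, div_le_iff₀ (by nlinarith)]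
    linarith
  have htail := tsum_mul_mul_le_of_hasSum hS (fun n => by positivity) (fun n => norm_nonneg _)
    fun n => norm_coeff_le_one_sub_sq hb' hsum (n := N + n) (by omega)
  have hbern : ‖f (z ^ m)‖ ^ p ≤ 1 + p * (‖f (z ^ m)‖ - 1) := by
    simpa using rpow_one_add_le_one_add_mul_self (s := ‖f (z ^ m)‖ - 1)
      (by linarith [norm_nonneg (f (z ^ m))]) hp0.le hp1
  have hA1 : ‖a 0‖ ≤ 1 := ha0 ▸ hb 0 (mem_ball_self one_pos)
  linarith [one_sub_sq_mul_le_of_schwarzPick (norm_nonneg _) hA1 (by positivity)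
    (hS.nonneg fun n => by positivity) hp0.le hpick hSρ]
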